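/- Let τ₁₁, τ₁₂, τ₂₂ be real polynomials in two variables of total degree at most 2 satisfying the row-wise divergence-free conditions ∂₁τ₁₁ + ∂₂τ₁₂ = 0 and ∂₁τ₁₂ + ∂₂τ₂₂ = 0. Then there exists a real polynomial β in two variables of total degree at most 4 such that τ₁₁ = ∂₂∂₂β, τ₁₂ = −∂₁∂₂β, and τ₂₂ = ∂₁∂₁β (that is, the symmetric matrix field τ equals Curl curl β, the Airy representation). -/
import Mathlib


open MvPolynomial Finsupp

noncomputable section

/-- Airy representation of divergence-free quadratic symmetric tensor fields:
if the quadratic polynomials `τ₁₁, τ₁₂, τ₂₂` satisfy the row-wise divergence-free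
conditions, then there is a quartic polynomial `β` with
`τ = Curl curl β = (∂₂∂₂β, −∂₁∂₂β; −∂₁∂₂β, ∂₁∂₁β)`. -/
def D (i j : ℕ) : Fin 2 →₀ ℕ := Finsupp.single 0 i + Finsupp.single 1 j

lemma D_apply0 (i j : ℕ) : (D i j) 0 = i := by simp [D]
lemma D_apply1 (i j : ℕ) : (D i j) 1 = j := by simp [D]
lemma D_eq_iff {i j i' j' : ℕ} : D i j = D i' j' ↔ i = i' ∧ j = j' := by
  constructor
  · intro h
    constructor
    · have := Finsupp.ext_iff.mp h 0; simpa [D_apply0] using this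
    · have := Finsupp.ext_iff.mp h 1; simpa [D_apply1] using this
  · rintro ⟨rfl, rfl⟩; rfl
lemma D_sub0 (i j : ℕ) : D i j - Finsupp.single 0 1 = D (i-1) j := by
  ext a; fin_cases a <;> simp [D, Finsupp.sub_apply]
lemma D_sub1 (i j : ℕ) : D i j - Finsupp.single 1 1 = D i (j-1) := by
  ext a; fin_cases a <;> simp [D, Finsupp.sub_apply]
lemma eq_D (m : Fin 2 →₀ ℕ) : m = D (m 0) (m 1) := by
  ext a; fin_cases a <;> simp [D]
lemma D_sum (i j : ℕ) : ((D i j).sum fun _ e => e) = i + j := by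
  unfold D
  rw [Finsupp.sum_add_index (by simp) (by simp)]
  simp

lemma expand2 (p : MvPolynomial (Fin 2) ℝ) (hp : p.totalDegree ≤ 2) :
    p = monomial (D 0 0) (coeff (D 0 0) p) + monomial (D 1 0) (coeff (D 1 0) p)
      + monomial (D 0 1) (coeff (D 0 1) p) + monomial (D 2 0) (coeff (D 2 0) p)
      + monomial (D 1 1) (coeff (D 1 1) p) + monomial (D 0 2) (coeff (D 0 2) p) := by
  ext m
  obtain ⟨i, j, rfl⟩ : ∃ i j, m = D i j := ⟨m 0, m 1, eq_D m⟩
  simp only [coeff_add, coeff_monomial]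
  by_cases h : i + j ≤ 2
  · have hi : i ≤ 2 := by omega
    have hj : j ≤ 2 := by omega
    interval_cases i <;> interval_cases j <;> simp_all [D_eq_iff]
  · rw [coeff_eq_zero_of_totalDegree_lt]
    · simp only [D_eq_iff]
      split_ifs <;> first | omega | norm_num
    · refine lt_of_le_of_lt hp ?_
      rw [show (∑ a ∈ (D i j).support, (D i j) a) = ((D i j).sum fun _ e => e) from rfl,
        D_sum]
      omega

set_option maxHeartbeats 2000000 in
theorem airy_representation
    (τ11 τ12 τ22 : MvPolynomial (Fin 2) ℝ)
    (h11 : τ11.totalDegree ≤ 2) (h12 : τ12.totalDegree ≤ 2) (h22 : τ22.totalDegree ≤ 2)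
    (hdiv1 : pderiv 0 τ11 + pderiv 1 τ12 = 0)
    (hdiv2 : pderiv 0 τ12 + pderiv 1 τ22 = 0) :
    ∃ β : MvPolynomial (Fin 2) ℝ, β.totalDegree ≤ 4 ∧
      τ11 = pderiv 1 (pderiv 1 β) ∧
      τ12 = - pderiv 0 (pderiv 1 β) ∧
      τ22 = pderiv 0 (pderiv 0 β) := by
  obtain ⟨a0, a1, a2, a3, a4, a5, e11⟩ :
      ∃ a0 a1 a2 a3 a4 a5, τ11 = monomial (D 0 0) a0 + monomial (D 1 0) a1
        + monomial (D 0 1) a2 + monomial (D 2 0) a3 + monomial (D 1 1) a4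
        + monomial (D 0 2) a5 := ⟨_, _, _, _, _, _, expand2 τ11 h11⟩
  obtain ⟨b0, b1, b2, b3, b4, b5, e12⟩ :
      ∃ b0 b1 b2 b3 b4 b5, τ12 = monomial (D 0 0) b0 + monomial (D 1 0) b1
        + monomial (D 0 1) b2 + monomial (D 2 0) b3 + monomial (D 1 1) b4
        + monomial (D 0 2) b5 := ⟨_, _, _, _, _, _, expand2 τ12 h12⟩
  obtain ⟨c0, c1, c2, c3, c4, c5, e22⟩ :
      ∃ c0 c1 c2 c3 c4 c5, τ22 = monomial (D 0 0) c0 + monomial (D 1 0) c1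
        + monomial (D 0 1) c2 + monomial (D 2 0) c3 + monomial (D 1 1) c4
        + monomial (D 0 2) c5 := ⟨_, _, _, _, _, _, expand2 τ22 h22⟩
  rw [e11, e12] at hdiv1
  rw [e12, e22] at hdiv2
  simp only [map_add, pderiv_monomial, D_apply0, D_apply1, D_sub0, D_sub1] at hdiv1 hdiv2
  norm_num at hdiv1 hdiv2
  have q1 := congrArg (coeff (D 0 0)) hdiv1
  have q2 := congrArg (coeff (D 1 0)) hdiv1
  have q3 := congrArg (coeff (D 0 1)) hdiv1
  have q4 := congrArg (coeff (D 0 0)) hdiv2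
  have q5 := congrArg (coeff (D 1 0)) hdiv2
  have q6 := congrArg (coeff (D 0 1)) hdiv2
  simp only [coeff_add, coeff_monomial, coeff_zero, D_eq_iff] at q1 q2 q3 q4 q5 q6
  norm_num at q1 q2 q3 q4 q5 q6
  have hb1 : b1 = -c2 := by linarith
  have hb2 : b2 = -a1 := by linarith
  have hb3 : b3 = -(c4 / 2) := by linarith
  have hb4 : b4 = -(a3 * 2) := by linarith
  have hb5 : b5 = -(a4 / 2) := by linarith
  have hc5 : c5 = a3 := by linarith
  subst hb1 hb2 hb3 hb4 hb5
  rw [hc5] at e22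
  refine ⟨monomial (D 0 2) (a0/2) + monomial (D 1 2) (a1/2) + monomial (D 0 3) (a2/6)
      + monomial (D 2 2) (a3/2) + monomial (D 1 3) (a4/6) + monomial (D 0 4) (a5/12)
      + monomial (D 2 0) (c0/2) + monomial (D 3 0) (c1/6) + monomial (D 2 1) (c2/2)
      + monomial (D 4 0) (c3/12) + monomial (D 3 1) (c4/6) + monomial (D 1 1) (-b0),
    ?_, ?_, ?_, ?_⟩
  · have hm : ∀ (i j : ℕ) (r : ℝ), i + j ≤ 4 →
        (monomial (D i j) r : MvPolynomial (Fin 2) ℝ).totalDegree ≤ 4 := by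
      intro i j r h
      refine (totalDegree_monomial_le _ _).trans ?_
      rw [show ((D i j).sum fun _ => id) = ((D i j).sum fun _ e => e) from rfl, D_sum]
      exact h
    have key : ∀ p q : MvPolynomial (Fin 2) ℝ, p.totalDegree ≤ 4 → q.totalDegree ≤ 4 →
        (p + q).totalDegree ≤ 4 := fun p q hp hq => (totalDegree_add _ _).trans (max_le hp hq)
    repeat' first
      | exact hm _ _ _ (by norm_num)
      | apply key
  · rw [e11]
    simp only [map_add, pderiv_monomial, D_apply0, D_apply1, D_sub0, D_sub1]
    norm_num
    rw [show (a2 / 6 * 3 * 2 : ℝ) = a2 by ring, show (a4 / 6 * 3 * 2 : ℝ) = a4 by ring,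
      show (a5 / 12 * 4 * 3 : ℝ) = a5 by ring]
  · rw [e12]
    simp only [map_add, map_neg, pderiv_monomial, D_apply0, D_apply1, D_sub0, D_sub1]
    norm_num
    rw [show (c4 / 6 * 3 : ℝ) = c4 / 2 by ring, show (a4 / 6 * 3 : ℝ) = a4 / 2 by ring]
    abel
  · rw [e22]
    simp only [map_add, pderiv_monomial, D_apply0, D_apply1, D_sub0, D_sub1]
    norm_num
    rw [show (c1 / 6 * 3 * 2 : ℝ) = c1 by ring, show (c3 / 12 * 4 * 3 : ℝ) = c3 by ring,
      show (c4 / 6 * 3 * 2 : ℝ) = c4 by ring]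
    abel
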